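/- arXiv:1702.05578 — 2 statements merged into one kernel-verified Lean document; each statement's English description precedes it below -/
import Mathlib

section
/- In the counter BPA system Δ₀, if α is a valid encoding of b_n…b_1 and β is a process with Var(β) ⊆ { Z_1^0, Z_1^1, …, Z_n^0, Z_n^1 }, then βα ≃ α if and only if Var(β) ⊆ { Z_1^{b_1}, …, Z_n^{b_n} }; and likewise βα ≈ α if and only if Var(β) ⊆ { Z_1^{b_1}, …, Z_n^{b_n} }. -/
/-- Silent-step closure (⇒): reflexive transitive closure of τ-transitions. -/
def SilentStar {S A : Type*} (trans : S → A → S → Prop) (tau : A) : S → S → Prop :=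
  Relation.ReflTransGen (fun p q => trans p tau q)

/-- A symmetric relation is a branching bisimulation. -/
def IsBranchingBisim {S A : Type*} (trans : S → A → S → Prop) (tau : A)
    (R : S → S → Prop) : Prop :=
  Symmetric R ∧
  ∀ a b a' (l : A), R a b → trans a l a' →
    (l = tau ∧ R a' b) ∨
    ∃ b'' b', SilentStar trans tau b b'' ∧ trans b'' l b' ∧ R a b'' ∧ R a' b'

/-- A symmetric relation is a weak bisimulation. -/
def IsWeakBisim {S A : Type*} (trans : S → A → S → Prop) (tau : A)
    (R : S → S → Prop) : Prop :=
  Symmetric R ∧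
  ∀ a b a' (l : A), R a b → trans a l a' →
    (l = tau ∧ R a' b) ∨
    ∃ g1 g2 b', SilentStar trans tau b g1 ∧ trans g1 l g2 ∧
      SilentStar trans tau g2 b' ∧ R a' b'

/-- Branching bisimilarity: the union of all branching bisimulations. -/
def BrBisim {S A : Type*} (trans : S → A → S → Prop) (tau : A) (a b : S) : Prop :=
  ∃ R, IsBranchingBisim trans tau R ∧ R a b

/-- Weak bisimilarity: the union of all weak bisimulations. -/
def WkBisim {S A : Type*} (trans : S → A → S → Prop) (tau : A) (a b : S) : Prop :=
  ∃ R, IsWeakBisim trans tau R ∧ R a b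

/-- One-step transition of a BPA system: X β →λ α β whenever X →λ α is a rule. -/
def BPA.Trans {V A : Type*} (rules : V → A → List V → Prop)
    (p : List V) (l : A) (q : List V) : Prop :=
  ∃ X α β, p = X :: β ∧ rules X l α ∧ q = α ++ β

/-- A step by some action. -/
def BPA.Step {V A : Type*} (rules : V → A → List V → Prop) (p q : List V) : Prop :=
  ∃ l, BPA.Trans rules p l q

/-- Reachability in a BPA system. -/
def BPA.Reach {V A : Type*} (rules : V → A → List V → Prop) : List V → List V → Prop :=
  Relation.ReflTransGen (BPA.Step rules)

/-- A BPA system is normed if every variable can reach the empty process ε. -/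
def BPA.Normed {V A : Type*} (rules : V → A → List V → Prop) : Prop :=
  ∀ X : V, BPA.Reach rules [X] []

/-- The redundant set Rd(α) = { X | Xα ≃ α }. -/
def BPA.Rd {V A : Type*} (rules : V → A → List V → Prop) (tau : A) (α : List V) : Set V :=
  {X | BrBisim (BPA.Trans rules) tau (X :: α) α}

/-- Variables of the counter system Δ₀. -/
inductive CVar (n : ℕ) : Type
  | B (i : Fin n) (b : Bool)
  | Z (i : Fin n) (b : Bool)
  | BP (i : Fin n) (b : Bool) (j : Fin n) (b' : Bool)
  deriving DecidableEq

/-- Actions of the counter system Δ₀. -/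
inductive CAct (n : ℕ) : Type
  | tau
  | d
  | a (i : Fin n) (b : Bool)
  deriving DecidableEq

/-- The rules of the counter system Δ₀. -/
inductive CRule {n : ℕ} : CVar n → CAct n → List (CVar n) → Prop
  | z_a (i : Fin n) (b : Bool) : CRule (.Z i b) (.a i b) []
  | z_tau (i : Fin n) (b : Bool) : CRule (.Z i b) .tau []
  | b_self (i : Fin n) (b : Bool) : CRule (.B i b) (.a i b) [.B i b]
  | b_d (i : Fin n) (b : Bool) : CRule (.B i b) .d []
  | b_obs (i : Fin n) (b : Bool) (j : Fin n) (b' : Bool) :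
      j ≠ i → CRule (.B i b) (.a j b') [.BP i b j b']
  | bp_self (i : Fin n) (b : Bool) (j : Fin n) (b' : Bool) :
      j ≠ i → CRule (.BP i b j b') (.a i b) [.BP i b j b']
  | bp_d (i : Fin n) (b : Bool) (j : Fin n) (b' : Bool) :
      j ≠ i → CRule (.BP i b j b') .d [.Z j b']
  | bp_obs (i : Fin n) (b : Bool) (j : Fin n) (b' : Bool) (j' : Fin n) (b'' : Bool) :
      j ≠ i → j' ≠ i → CRule (.BP i b j b') (.a j' b'') [.BP i b j' b'']

/-- Branching bisimilarity on processes of Δ₀. -/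
def CBisim {n : ℕ} (p q : List (CVar n)) : Prop :=
  BrBisim (BPA.Trans (@CRule n)) CAct.tau p q

/-- Weak bisimilarity on processes of Δ₀. -/
def CWeak {n : ℕ} (p q : List (CVar n)) : Prop :=
  WkBisim (BPA.Trans (@CRule n)) CAct.tau p q

/-- α is a valid encoding of the n-bit binary number with i-th bit `bits i`. -/
def ValidEnc {n : ℕ} (α : List (CVar n)) (bits : Fin n → Bool) : Prop :=
  (∀ X ∈ α, ∃ i b, X = CVar.B i b) ∧
  ∀ i : Fin n, ∃ α₁ α₂ : List (CVar n),
    α = α₁ ++ CVar.B i (bits i) :: α₂ ∧ CVar.B i (!(bits i)) ∉ α₁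

/-!
A prefix `Z_i^c` in front of a process made of bit variables is redundant exactly when the
first bit variable of index `i` carries the bit `c`. For sufficiency, a process
`X ρ` with `X = BP(j,b,i,c)` behaves like `B_j^b ρ` as long as `Z_i^c ρ ≃ ρ`: both loop on
`a_j^b`, both move to `BP(j,b,i',c') ρ` on `a_{i'}^{c'}`, and their `d`-steps lead to `ρ` and
`Z_i^c ρ`. Pairs of such heads, padded with absorbed `Z`-prefixes, form a branching
bisimulation. For necessity, if `Z_i^c γ ≈ γ` with `γ = B_j^b γ'`, the step `a_i^c` of `Z_i^c`
must be matched either by the loop of `B_j^b` (so `j = i` and `b = c`) or by the move to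
`BP(j,b,i,c) γ'`, whose `d`-step forces `Z_i^c γ' ≈ γ'`; one inducts along `γ`.
-/

section LTS

variable {S A : Type*} {trans : S → A → S → Prop} {τ : A}

theorem SilentStar.eq_of_forall_not_trans {p p' : S} (hp : ∀ q, ¬ trans p τ q)
    (h : SilentStar trans τ p p') : p' = p := by
  rcases Relation.ReflTransGen.cases_head h with rfl | ⟨q, hq, -⟩
  · rfl
  · exact absurd hq (hp q)

theorem IsBranchingBisim.isWeakBisim {R : S → S → Prop} (hR : IsBranchingBisim trans τ R) :
    IsWeakBisim trans τ R := by
  refine ⟨hR.1, fun p q p' l hpq hp => ?_⟩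
  rcases hR.2 p q p' l hpq hp with h | ⟨q₁, q', hq₁, hq', -, h⟩
  · exact .inl h
  · exact .inr ⟨q₁, q', q', hq₁, hq', .refl, h⟩

theorem BrBisim.wkBisim {p q : S} (h : BrBisim trans τ p q) : WkBisim trans τ p q :=
  let ⟨_, hR, hpq⟩ := h
  ⟨_, hR.isWeakBisim, hpq⟩

theorem IsWeakBisim.exists_silentStar {R : S → S → Prop} (hR : IsWeakBisim trans τ R)
    {p q p' : S} (hpq : R p q) (hp : SilentStar trans τ p p') :
    ∃ q', SilentStar trans τ q q' ∧ R p' q' := by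
  induction hp with
  | refl => exact ⟨q, .refl, hpq⟩
  | tail _ hstep ih =>
    obtain ⟨q', hq', h⟩ := ih
    rcases hR.2 _ _ _ _ h hstep with ⟨-, h⟩ | ⟨g₁, g₂, q'', hg₁, hg₂, hq'', h⟩
    · exact ⟨q', hq', h⟩
    · exact ⟨q'', hq'.trans (hg₁.trans ((Relation.ReflTransGen.single hg₂).trans hq'')), h⟩

theorem IsWeakBisim.exists_trans_of_forall_not_trans {R : S → S → Prop}
    (hR : IsWeakBisim trans τ R) {p q p' : S} {l : A} (hl : l ≠ τ) (hq : ∀ q', ¬ trans q τ q')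
    (hpq : R p q) (hp : trans p l p') :
    ∃ q₁ q', trans q l q₁ ∧ SilentStar trans τ q₁ q' ∧ R p' q' := by
  rcases hR.2 p q p' l hpq hp with ⟨rfl, -⟩ | ⟨g₁, q₁, q', hg₁, hq₁, hq', h⟩
  · exact absurd rfl hl
  · obtain rfl := SilentStar.eq_of_forall_not_trans hq hg₁
    exact ⟨q₁, q', hq₁, hq', h⟩

end LTS

namespace Counter

open CVar CAct

variable {n : ℕ}

abbrev Tr : List (CVar n) → CAct n → List (CVar n) → Prop := BPA.Trans (@CRule n)

abbrev Silent : List (CVar n) → List (CVar n) → Prop := SilentStar (@Tr n) tau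

/-- `BP j b i c` carries the bit `b` of index `j`, like `B j b`; `Z`-variables carry none. -/
def firstBit (i : Fin n) : List (CVar n) → Option Bool
  | [] => none
  | B j b :: ρ | BP j b _ _ :: ρ => if j = i then some b else firstBit i ρ
  | Z _ _ :: ρ => firstBit i ρ

def IsZList (β : List (CVar n)) : Prop := ∀ X ∈ β, ∃ i c, X = Z i c

def IsBList (γ : List (CVar n)) : Prop := ∀ X ∈ γ, ∃ j b, X = B j b

def Absorbs (γ β : List (CVar n)) : Prop := ∀ X ∈ β, ∃ i c, X = Z i c ∧ firstBit i γ = some c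

theorem IsBList.tail {X : CVar n} {γ : List (CVar n)} (h : IsBList (X :: γ)) : IsBList γ :=
  fun Y hY => h Y (List.mem_cons_of_mem X hY)

theorem Absorbs.isZList {γ β : List (CVar n)} (h : Absorbs γ β) : IsZList β := fun X hX =>
  let ⟨i, c, hX, _⟩ := h X hX
  ⟨i, c, hX⟩

theorem absorbs_nil (γ : List (CVar n)) : Absorbs γ [] := by simp [Absorbs]

theorem absorbs_singleton {γ : List (CVar n)} {i : Fin n} {c : Bool}
    (h : firstBit i γ = some c) : Absorbs γ [Z i c] := fun _ hX =>
  ⟨i, c, List.mem_singleton.1 hX, h⟩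

theorem tr_cons_iff {X : CVar n} {ρ q : List (CVar n)} {l : CAct n} :
    Tr (X :: ρ) l q ↔ ∃ w, CRule X l w ∧ q = w ++ ρ := by
  constructor
  · rintro ⟨X', w, ρ', h, hr, rfl⟩
    obtain ⟨rfl, rfl⟩ := List.cons.inj h
    exact ⟨w, hr, rfl⟩
  · rintro ⟨w, hr, rfl⟩
    exact ⟨X, w, ρ, rfl, hr, rfl⟩

theorem not_tr_nil {l : CAct n} {q : List (CVar n)} : ¬ Tr [] l q := by
  rintro ⟨_, _, _, h, -, -⟩
  cases h

theorem not_tr_tau_cons {X : CVar n} {ρ q : List (CVar n)} (hX : ∀ i c, X ≠ Z i c) :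
    ¬ Tr (X :: ρ) tau q := by
  rw [tr_cons_iff]
  rintro ⟨w, hr, -⟩
  cases hr
  exact hX _ _ rfl

theorem IsBList.not_tr_tau {γ q : List (CVar n)} (hγ : IsBList γ) : ¬ Tr γ tau q := by
  cases γ with
  | nil => exact not_tr_nil
  | cons X γ =>
    obtain ⟨j, b, rfl⟩ := hγ X List.mem_cons_self
    exact not_tr_tau_cons fun _ _ h => nomatch h

theorem IsBList.silent_eq {γ q : List (CVar n)} (hγ : IsBList γ) (h : Silent γ q) : q = γ :=
  SilentStar.eq_of_forall_not_trans (fun _ => hγ.not_tr_tau) h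

theorem IsZList.silent_append {β : List (CVar n)} (hβ : IsZList β) (γ : List (CVar n)) :
    Silent (β ++ γ) γ := by
  induction β with
  | nil => exact .refl
  | cons X β ih =>
    obtain ⟨i, c, rfl⟩ := hβ X List.mem_cons_self
    exact .head (tr_cons_iff.2 ⟨[], .z_tau i c, rfl⟩)
      (ih fun Y hY => hβ Y (List.mem_cons_of_mem _ hY))

/-- The heads `X` with `X ρ ≃ B_j^b ρ`. -/
inductive Head (j : Fin n) (b : Bool) (ρ : List (CVar n)) : CVar n → Prop
  | bit : Head j b ρ (CVar.B j b)
  | observed {i : Fin n} {c : Bool} : i ≠ j → firstBit i ρ = some c →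
      Head j b ρ (CVar.BP j b i c)

namespace Head

variable {j : Fin n} {b : Bool} {ρ : List (CVar n)} {X : CVar n}

theorem firstBit_cons (hX : Head j b ρ X) (i : Fin n) :
    firstBit i (X :: ρ) = if j = i then some b else firstBit i ρ := by
  cases hX <;> rfl

theorem tr_self (hX : Head j b ρ X) : Tr (X :: ρ) (a j b) (X :: ρ) := by
  cases hX with
  | bit => exact tr_cons_iff.2 ⟨_, .b_self j b, rfl⟩
  | observed hij _ => exact tr_cons_iff.2 ⟨_, .bp_self _ _ _ _ hij, rfl⟩

theorem tr_observe (hX : Head j b ρ X) {i : Fin n} (c : Bool) (hij : i ≠ j) :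
    Tr (X :: ρ) (a i c) (BP j b i c :: ρ) := by
  cases hX with
  | bit => exact tr_cons_iff.2 ⟨_, .b_obs j b i c hij, rfl⟩
  | observed hi'j _ => exact tr_cons_iff.2 ⟨_, .bp_obs _ _ _ _ i c hi'j hij, rfl⟩

theorem exists_tr_d (hX : Head j b ρ X) : ∃ β, Absorbs ρ β ∧ Tr (X :: ρ) d (β ++ ρ) := by
  cases hX with
  | bit => exact ⟨[], absorbs_nil ρ, tr_cons_iff.2 ⟨_, .b_d j b, rfl⟩⟩
  | observed hij hρ =>
    exact ⟨_, absorbs_singleton hρ, tr_cons_iff.2 ⟨_, .bp_d _ _ _ _ hij, rfl⟩⟩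

theorem tr_cases (hX : Head j b ρ X) {l : CAct n} {p : List (CVar n)} (h : Tr (X :: ρ) l p) :
    (l = a j b ∧ p = X :: ρ) ∨ (∃ i c, i ≠ j ∧ l = a i c ∧ p = BP j b i c :: ρ) ∨
      (l = d ∧ ∃ β, Absorbs ρ β ∧ p = β ++ ρ) := by
  obtain ⟨w, hr, rfl⟩ := tr_cons_iff.1 h
  cases hX with
  | bit =>
    cases hr with
    | b_self => exact .inl ⟨rfl, rfl⟩
    | b_d => exact .inr (.inr ⟨rfl, [], absorbs_nil ρ, rfl⟩)
    | b_obs _ _ i c hij => exact .inr (.inl ⟨i, c, hij, rfl, rfl⟩)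
  | observed _ hρ =>
    cases hr with
    | bp_self => exact .inl ⟨rfl, rfl⟩
    | bp_d => exact .inr (.inr ⟨rfl, _, absorbs_singleton hρ, rfl⟩)
    | bp_obs _ _ _ _ i c _ hij => exact .inr (.inl ⟨i, c, hij, rfl, rfl⟩)

theorem exists_tr_a (hX : Head j b ρ X) {i : Fin n} {c : Bool}
    (h : firstBit i (X :: ρ) = some c) : ∃ X', Head j b ρ X' ∧ Tr (X :: ρ) (a i c) (X' :: ρ) := by
  rw [hX.firstBit_cons] at h
  split_ifs at h with hji
  · obtain rfl := hji
    obtain rfl := Option.some.inj h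
    exact ⟨X, hX, hX.tr_self⟩
  · exact ⟨_, .observed (Ne.symm hji) h, hX.tr_observe c (Ne.symm hji)⟩

end Head

inductive Core : List (CVar n) → List (CVar n) → Prop
  | refl {δ : List (CVar n)} : IsBList δ → Core δ δ
  | heads {j : Fin n} {b : Bool} {X Y : CVar n} {ρ : List (CVar n)} :
      IsBList ρ → Head j b ρ X → Head j b ρ Y → Core (X :: ρ) (Y :: ρ)

namespace Core

variable {δ γ : List (CVar n)}

theorem symm (h : Core δ γ) : Core γ δ := by
  cases h with
  | refl hδ => exact .refl hδ
  | heads hρ hX hY => exact .heads hρ hY hX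

theorem exists_tr_a (h : Core δ γ) {i : Fin n} {c : Bool} (hδ : firstBit i δ = some c) :
    ∃ γ', Tr γ (a i c) γ' ∧ Core δ γ' := by
  cases h with
  | refl hB =>
    cases δ with
    | nil => cases hδ
    | cons X ρ =>
      obtain ⟨j, b, rfl⟩ := hB X List.mem_cons_self
      obtain ⟨X', hX', htr⟩ := Head.bit.exists_tr_a hδ
      exact ⟨_, htr, .heads hB.tail .bit hX'⟩
  | heads hρ hX hY =>
    obtain ⟨Y', hY', htr⟩ := hY.exists_tr_a (by rwa [hY.firstBit_cons, ← hX.firstBit_cons])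
    exact ⟨_, htr, .heads hρ hX hY'⟩

end Core

def CoreRel (p q : List (CVar n)) : Prop :=
  ∃ β β' δ γ, p = β ++ δ ∧ q = β' ++ γ ∧ Absorbs δ β ∧ Absorbs γ β' ∧ Core δ γ

def BisimRel (p q : List (CVar n)) : Prop := p = q ∨ CoreRel p q

theorem Core.coreRel {δ γ : List (CVar n)} (h : Core δ γ) : CoreRel δ γ :=
  ⟨[], [], δ, γ, rfl, rfl, absorbs_nil δ, absorbs_nil γ, h⟩

theorem BisimRel.symm : Symmetric (@BisimRel n) := by
  rintro p q (rfl | ⟨β, β', δ, γ, rfl, rfl, hβ, hβ', h⟩)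
  · exact .inl rfl
  · exact .inr ⟨β', β, γ, δ, rfl, rfl, hβ', hβ, h.symm⟩

theorem Core.exists_response {δ γ p : List (CVar n)} {l : CAct n} (h : Core δ γ)
    (hδ : Tr δ l p) : ∃ q, Tr γ l q ∧ BisimRel p q := by
  cases h with
  | refl _ => exact ⟨p, hδ, .inl rfl⟩
  | heads hρ hX hY =>
    rcases hX.tr_cases hδ with ⟨rfl, rfl⟩ | ⟨i, c, hij, rfl, rfl⟩ | ⟨rfl, β, hβ, rfl⟩
    · exact ⟨_, hY.tr_self, .inr (Core.heads hρ hX hY).coreRel⟩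
    · exact ⟨_, hY.tr_observe c hij, .inl rfl⟩
    · obtain ⟨β', hβ', htr⟩ := hY.exists_tr_d
      exact ⟨_, htr, .inr ⟨β, β', _, _, rfl, rfl, hβ, hβ', .refl hρ⟩⟩

theorem isBranchingBisim_bisimRel : IsBranchingBisim (@Tr n) tau BisimRel := by
  refine ⟨BisimRel.symm, ?_⟩
  rintro p q p' l (rfl | ⟨β, β', δ, γ, rfl, rfl, hβ, hβ', hδγ⟩) hp
  · exact .inr ⟨p, p', .refl, hp, .inl rfl, .inl rfl⟩
  have hq : Silent (β' ++ γ) γ := hβ'.isZList.silent_append γ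
  have hpγ : BisimRel (β ++ δ) γ := .inr ⟨β, [], δ, γ, rfl, rfl, hβ, absorbs_nil γ, hδγ⟩
  cases β with
  | nil =>
    obtain ⟨q', hq', hpq'⟩ := hδγ.exists_response hp
    exact .inr ⟨γ, q', hq, hq', hpγ, hpq'⟩
  | cons X β =>
    obtain ⟨⟨i, c, rfl, hc⟩, hβt⟩ := List.forall_mem_cons.1 hβ
    obtain ⟨w, hr, rfl⟩ := tr_cons_iff.1 hp
    cases hr with
    | z_tau => exact .inl ⟨rfl, .inr ⟨β, β', δ, γ, rfl, rfl, hβt, hβ', hδγ⟩⟩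
    | z_a =>
      obtain ⟨γ', hγ', hδγ'⟩ := hδγ.exists_tr_a hc
      exact .inr ⟨γ, γ', hq, hγ', hpγ, .inr ⟨β, [], δ, γ', rfl, rfl, hβt, absorbs_nil γ', hδγ'⟩⟩

section Weak

variable {R : List (CVar n) → List (CVar n) → Prop}

theorem exists_tr_a_of_isWeakBisim_Z_cons (hR : IsWeakBisim (@Tr n) tau R) {i : Fin n}
    {c : Bool} {t γ : List (CVar n)} (hγ : IsBList γ) (h : R (Z i c :: (t ++ γ)) γ) :
    ∃ γ₁ q, Tr γ (a i c) γ₁ ∧ Silent γ₁ q ∧ R (t ++ γ) q :=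
  hR.exists_trans_of_forall_not_trans (by simp) (fun _ => hγ.not_tr_tau) h
    (tr_cons_iff.2 ⟨[], .z_a i c, rfl⟩)

theorem eq_or_rel_tail_of_isWeakBisim_Z_cons (hR : IsWeakBisim (@Tr n) tau R) {i j : Fin n}
    {b c : Bool} {t γ : List (CVar n)} (hγ : IsBList (B j b :: γ)) (ht : IsZList t)
    (h : R (Z i c :: (t ++ B j b :: γ)) (B j b :: γ)) :
    (j = i ∧ b = c) ∨ (j ≠ i ∧ R (Z i c :: γ) γ) := by
  obtain ⟨γ₁, q, hγ₁, hq, h⟩ := exists_tr_a_of_isWeakBisim_Z_cons hR hγ h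
  obtain ⟨w, hr, rfl⟩ := tr_cons_iff.1 hγ₁
  cases hr with
  | b_self => exact .inl ⟨rfl, rfl⟩
  | b_obs _ _ _ _ hij =>
    -- `BP j b i c :: γ` is now related to `B j b :: γ`, whose only `d`-step drops `Z i c`.
    obtain rfl := SilentStar.eq_of_forall_not_trans (fun _ => not_tr_tau_cons (by simp)) hq
    obtain ⟨q', hq', h⟩ := hR.exists_silentStar h (ht.silent_append _)
    obtain rfl := SilentStar.eq_of_forall_not_trans (fun _ => not_tr_tau_cons (by simp)) hq'
    obtain ⟨γ₂, q, hγ₂, hq, h⟩ := hR.exists_trans_of_forall_not_trans (by simp)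
      (fun _ => hγ.not_tr_tau) (hR.1 h) (tr_cons_iff.2 ⟨_, .bp_d j b i c hij, rfl⟩)
    obtain ⟨w, hr, rfl⟩ := tr_cons_iff.1 hγ₂
    cases hr
    obtain rfl := hγ.tail.silent_eq hq
    exact .inr ⟨hij.symm, h⟩

theorem firstBit_eq_of_isWeakBisim_Z_cons (hR : IsWeakBisim (@Tr n) tau R) {i : Fin n}
    {c : Bool} {γ t : List (CVar n)} (hγ : IsBList γ) (ht : IsZList t)
    (h : R (Z i c :: (t ++ γ)) γ) :
    firstBit i γ = some c := by
  induction γ generalizing t with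
  | nil =>
    obtain ⟨_, _, hγ₁, -⟩ := exists_tr_a_of_isWeakBisim_Z_cons hR hγ h
    exact absurd hγ₁ not_tr_nil
  | cons X γ ih =>
    obtain ⟨j, b, rfl⟩ := hγ X List.mem_cons_self
    rcases eq_or_rel_tail_of_isWeakBisim_Z_cons hR hγ ht h with ⟨rfl, rfl⟩ | ⟨hji, h⟩
    · simp [firstBit]
    · simpa [firstBit, hji] using ih hγ.tail (t := []) (fun _ => by simp) h

theorem absorbs_of_isWeakBisim_append (hR : IsWeakBisim (@Tr n) tau R) {β γ : List (CVar n)}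
    (hβ : IsZList β) (hγ : IsBList γ) (h : R (β ++ γ) γ) : Absorbs γ β := by
  intro X hX
  obtain ⟨i, c, rfl⟩ := hβ X hX
  obtain ⟨s, t, rfl⟩ := List.append_of_mem hX
  simp only [List.append_assoc, List.cons_append] at h
  have hs : IsZList s := fun Y hY => hβ Y (List.mem_append_left _ hY)
  have ht : IsZList t := fun Y hY => hβ Y (by simp [hY])
  obtain ⟨q, hq, h⟩ := hR.exists_silentStar h (hs.silent_append _)
  obtain rfl := hγ.silent_eq hq
  exact ⟨i, c, rfl, firstBit_eq_of_isWeakBisim_Z_cons hR hγ ht h⟩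

end Weak

theorem bisim_append_iff_absorbs {β γ : List (CVar n)} (hβ : IsZList β) (hγ : IsBList γ) :
    (CBisim (β ++ γ) γ ↔ Absorbs γ β) ∧ (CWeak (β ++ γ) γ ↔ Absorbs γ β) := by
  have hweak : CWeak (β ++ γ) γ → Absorbs γ β := fun ⟨_, hR, h⟩ =>
    absorbs_of_isWeakBisim_append hR hβ hγ h
  have hbisim : Absorbs γ β → CBisim (β ++ γ) γ := fun h =>
    ⟨BisimRel, isBranchingBisim_bisimRel, .inr ⟨β, [], γ, γ, rfl, rfl, h, absorbs_nil γ, .refl hγ⟩⟩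
  exact ⟨⟨fun h => hweak h.wkBisim, hbisim⟩, ⟨hweak, fun h => (hbisim h).wkBisim⟩⟩

theorem firstBit_of_validEnc {α : List (CVar n)} {bits : Fin n → Bool} (hα : ValidEnc α bits)
    (i : Fin n) : firstBit i α = some (bits i) := by
  obtain ⟨α₁, α₂, rfl, hα₁⟩ := hα.2 i
  have hB : IsBList α₁ := fun X hX => hα.1 X (List.mem_append_left _ hX)
  clear hα
  induction α₁ with
  | nil => simp [firstBit]
  | cons X α₁ ih =>
    obtain ⟨j, b, rfl⟩ := hB X List.mem_cons_self
    simp only [List.cons_append, firstBit]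
    split_ifs with hji
    · subst hji
      exact congrArg some (Bool.ne_not.1 fun h => hα₁ (h ▸ List.mem_cons_self))
    · exact ih (fun h => hα₁ (List.mem_cons_of_mem _ h)) hB.tail

end Counter

/-- Multi-bit test in the counter system Δ₀: for a valid encoding α of b_n…b_1
and β built from Z-variables, βα ≃ α iff Var(β) ⊆ { Z_1^{b_1}, …, Z_n^{b_n} },
and likewise for weak bisimilarity. -/
theorem counter_bits_test {n : ℕ} (α β : List (CVar n)) (bits : Fin n → Bool)
    (hα : ValidEnc α bits)
    (hβ : ∀ X ∈ β, ∃ (i : Fin n) (b : Bool), X = CVar.Z i b) :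
    (CBisim (β ++ α) α ↔ ∀ X ∈ β, ∃ i : Fin n, X = CVar.Z i (bits i)) ∧
    (CWeak (β ++ α) α ↔ ∀ X ∈ β, ∃ i : Fin n, X = CVar.Z i (bits i)) := by
  have habsorbs : Counter.Absorbs α β ↔ ∀ X ∈ β, ∃ i : Fin n, X = CVar.Z i (bits i) := by
    refine forall₂_congr fun X hX => ?_
    obtain ⟨i, c, rfl⟩ := hβ X hX
    simp [Counter.firstBit_of_validEnc hα, eq_comm]
  rw [← habsorbs]
  exact Counter.bisim_append_iff_absorbs hβ hα.1
end

section
/- If a process X₀α of a normed BPA system admits a witness path in the graph G(Δ) — a path (X₀, Rd(α)) →^{u₁} (X₁,R₁) →^{u₂} … →^{u_k} (X_k,R_k) with some 0 ≤ i < k such that X_i = X_k, R_i = R_k, and Σ_{j=i+1}^{k} u_j > 0 — then for every m > 0 there is a process β_m reachable from X₀α with branching norm ‖β_m‖_b ≥ m; consequently X₀α is not regular with respect to branching bisimilarity. -/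
/-- γ ⇒_{≃} γ' : silent moves between branching bisimilar processes. -/
def SBStar {S A : Type*} (trans : S → A → S → Prop) (tau : A) (p q : S) : Prop :=
  SilentStar trans tau p q ∧ BrBisim trans tau p q

/-- A state-changing step: a visible action, or a silent step to a
non-branching-bisimilar state. -/
def JStep {S A : Type*} (trans : S → A → S → Prop) (tau : A) (p q : S) : Prop :=
  (∃ a, a ≠ tau ∧ trans p a q) ∨ (trans p tau q ∧ ¬ BrBisim trans tau p q)

/-- `Cost trans tau p q k` : there is a sequence from `p` to `q` alternating
≃-preserving silent phases and state-changing steps, with exactly `k`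
state-changing steps. -/
inductive Cost {S A : Type*} (trans : S → A → S → Prop) (tau : A) : S → S → ℕ → Prop
  | zero {p q : S} : SBStar trans tau p q → Cost trans tau p q 0
  | step {p p' p'' q : S} {k : ℕ} : SBStar trans tau p p' → JStep trans tau p' p'' →
      Cost trans tau p'' q k → Cost trans tau p q (k + 1)

/-- The branching norm of α relative to β: minimal number of state-changing
steps to reduce αβ to β. -/
noncomputable def BPA.bnormRel {V A : Type*} (rules : V → A → List V → Prop) (tau : A)
    (α β : List V) : ℕ :=
  sInf {k | Cost (BPA.Trans rules) tau (α ++ β) β k}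

/-- The branching norm of α. -/
noncomputable def BPA.bnorm {V A : Type*} (rules : V → A → List V → Prop) (tau : A)
    (α : List V) : ℕ :=
  BPA.bnormRel rules tau α []

/-- A realizable redundant set. -/
def BPA.Realizable {V A : Type*} (rules : V → A → List V → Prop) (tau : A)
    (R : Set V) : Prop :=
  ∃ γ : List V, BPA.Rd rules tau γ = R

/-- Edge of the graph G(Δ): there is a rule X₁ →λ σX₂δ with
Rd(δγ_{R₁}) = R₂ for a representative γ of R₁. -/
def BPA.GEdge {V A : Type*} (rules : V → A → List V → Prop) (tau : A)
    (X₁ : V) (R₁ : Set V) (X₂ : V) (R₂ : Set V) : Prop :=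
  ∃ (l : A) (σ δ γ : List V), rules X₁ l (σ ++ X₂ :: δ) ∧
    BPA.Rd rules tau γ = R₁ ∧ BPA.Rd rules tau (δ ++ γ) = R₂

/-- The condition making an edge of G(Δ) have weight 1: some witnessing rule
additionally satisfies ‖δ‖_b^{R₁} > 0. -/
def BPA.GHeavy {V A : Type*} (rules : V → A → List V → Prop) (tau : A)
    (X₁ : V) (R₁ : Set V) (X₂ : V) (R₂ : Set V) : Prop :=
  ∃ (l : A) (σ δ γ : List V), rules X₁ l (σ ++ X₂ :: δ) ∧
    BPA.Rd rules tau γ = R₁ ∧ BPA.Rd rules tau (δ ++ γ) = R₂ ∧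
    0 < BPA.bnormRel rules tau δ γ

/-- Combined transition relation of the disjoint sum of a BPA system and an
arbitrary labeled transition system. -/
def SumTrans {S₁ S₂ A : Type*} (t₁ : S₁ → A → S₁ → Prop) (t₂ : S₂ → A → S₂ → Prop) :
    S₁ ⊕ S₂ → A → S₁ ⊕ S₂ → Prop
  | .inl p, l, .inl q => t₁ p l q
  | .inr p, l, .inr q => t₂ p l q
  | _, _, _ => False

/-- A BPA process is regular w.r.t. branching bisimilarity if it is branching
bisimilar to a finite-state process of some (possibly different) labeled
transition system over the same actions. -/
def BPA.RegularBr {V : Type*} {A : Type} (rules : V → A → List V → Prop) (tau : A)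
    (α : List V) : Prop :=
  ∃ (S : Type) (t : S → A → S → Prop) (s : S),
    {q | Relation.ReflTransGen (fun p q => ∃ l, t p l q) s q}.Finite ∧
    BrBisim (SumTrans (BPA.Trans rules) t) tau (Sum.inl α) (Sum.inr s)

/-!
Following the path from `(X₀, Rd α)` to the start `i` of the cycle turns `X₀ α` into `Xᵢ ζ`
with `Rd ζ = Rᵢ`, and going once around the cycle turns any such `Xᵢ ζ` into `Xᵢ C ζ` with
`Rd (C ζ) = Rᵢ` again. This rests on the congruence property of normed BPA: whether `ξ γ ≃ η γ`
depends only on `Rd γ`, so `Rd (δ γ)` is determined by `δ` and `Rd γ`. For the same reason the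
string `δ` pushed by the heavy edge of the cycle cannot silently vanish into any tail with the
right redundant set, hence neither can `C`, and so `‖C ζ‖_b > ‖ζ‖_b`. Iterating the cycle gives
reachable processes of unbounded branching norm. Branching norm is invariant under `≃`, so a
finite-state process `≃ X₀ α` would give reachable processes only finitely many norms.
-/

section Bisimilarity

variable {S A : Type*} {t : S → A → S → Prop} {tau : A}

theorem BrBisim.refl (p : S) : BrBisim t tau p p := by
  refine ⟨Eq, ⟨fun _ _ h => h.symm, ?_⟩, rfl⟩
  rintro a _ a' l rfl ht
  exact Or.inr ⟨a, a', .refl, ht, rfl, rfl⟩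

theorem BrBisim.symm {p q : S} (h : BrBisim t tau p q) : BrBisim t tau q p :=
  let ⟨R, hR, hpq⟩ := h
  ⟨R, hR, hR.1 hpq⟩

theorem BrBisim.transfer_mono {R : S → S → Prop} (hR : ∀ {x y}, BrBisim t tau x y → R x y)
    {a b a' : S} {l : A} (h : BrBisim t tau a b) (ht : t a l a') :
    (l = tau ∧ R a' b) ∨
      ∃ b'' b', SilentStar t tau b b'' ∧ t b'' l b' ∧ R a b'' ∧ R a' b' := by
  obtain ⟨B, hB, hab⟩ := h
  rcases hB.2 a b a' l hab ht with ⟨hl, h₁⟩ | ⟨b'', b', hs, ht', h₁, h₂⟩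
  · exact Or.inl ⟨hl, hR ⟨B, hB, h₁⟩⟩
  · exact Or.inr ⟨b'', b', hs, ht', hR ⟨B, hB, h₁⟩, hR ⟨B, hB, h₂⟩⟩

theorem BrBisim.transfer {a b a' : S} {l : A} (h : BrBisim t tau a b) (ht : t a l a') :
    (l = tau ∧ BrBisim t tau a' b) ∨
      ∃ b'' b', SilentStar t tau b b'' ∧ t b'' l b' ∧
        BrBisim t tau a b'' ∧ BrBisim t tau a' b' :=
  h.transfer_mono id ht

/-- Semi-branching bisimulation (Basten). Unlike branching bisimulations these are closed under
composition, which is how transitivity of branching bisimilarity is obtained. -/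
def IsSemiBrBisim (t : S → A → S → Prop) (tau : A) (R : S → S → Prop) : Prop :=
  (∀ a b, R a b → R b a) ∧
  ∀ a b a' (l : A), R a b → t a l a' →
    (∃ b'', SilentStar t tau b b'' ∧ l = tau ∧ R a b'' ∧ R a' b'') ∨
    (∃ b'' b', SilentStar t tau b b'' ∧ t b'' l b' ∧ R a b'' ∧ R a' b')

def SemiBrBisim (t : S → A → S → Prop) (tau : A) (a b : S) : Prop :=
  ∃ R, IsSemiBrBisim t tau R ∧ R a b

theorem SemiBrBisim.symm {p q : S} (h : SemiBrBisim t tau p q) :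
    SemiBrBisim t tau q p :=
  let ⟨R, hR, hpq⟩ := h
  ⟨R, hR, hR.1 _ _ hpq⟩

theorem BrBisim.semiBrBisim {p q : S} (h : BrBisim t tau p q) :
    SemiBrBisim t tau p q := by
  obtain ⟨R, hR, hpq⟩ := h
  refine ⟨R, ⟨fun _ _ h => hR.1 h, fun a b a' l hab ht => ?_⟩, hpq⟩
  rcases hR.2 a b a' l hab ht with ⟨hl, h₁⟩ | h'
  · exact Or.inl ⟨b, .refl, hl, hab, h₁⟩
  · exact Or.inr h'

theorem SemiBrBisim.refl (p : S) : SemiBrBisim t tau p p :=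
  (BrBisim.refl p).semiBrBisim

theorem SemiBrBisim.transfer {a b a' : S} {l : A} (h : SemiBrBisim t tau a b)
    (ht : t a l a') :
    (∃ b'', SilentStar t tau b b'' ∧ l = tau ∧ SemiBrBisim t tau a b'' ∧
      SemiBrBisim t tau a' b'') ∨
    (∃ b'' b', SilentStar t tau b b'' ∧ t b'' l b' ∧
      SemiBrBisim t tau a b'' ∧ SemiBrBisim t tau a' b') := by
  obtain ⟨R, hR, hab⟩ := h
  rcases hR.2 a b a' l hab ht with ⟨b'', hs, hl, h₁, h₂⟩ | ⟨b'', b', hs, ht', h₁, h₂⟩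
  · exact Or.inl ⟨b'', hs, hl, ⟨R, hR, h₁⟩, ⟨R, hR, h₂⟩⟩
  · exact Or.inr ⟨b'', b', hs, ht', ⟨R, hR, h₁⟩, ⟨R, hR, h₂⟩⟩

theorem SemiBrBisim.exists_silentStar {b b'' c : S} (hs : SilentStar t tau b b'')
    (hbc : SemiBrBisim t tau b c) :
    ∃ c'', SilentStar t tau c c'' ∧ SemiBrBisim t tau b'' c'' := by
  induction hs using Relation.ReflTransGen.head_induction_on generalizing c with
  | refl => exact ⟨c, .refl, hbc⟩
  | head hstep _ ih =>
    rcases hbc.transfer hstep with ⟨c₀, hs₀, -, -, h₀⟩ | ⟨c₀, c₁, hs₀, ht, -, h₁⟩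
    · obtain ⟨c'', hs'', h''⟩ := ih h₀
      exact ⟨c'', hs₀.trans hs'', h''⟩
    · obtain ⟨c'', hs'', h''⟩ := ih h₁
      exact ⟨c'', (hs₀.tail ht).trans hs'', h''⟩

theorem SemiBrBisim.trans {p q r : S} (hpq : SemiBrBisim t tau p q)
    (hqr : SemiBrBisim t tau q r) : SemiBrBisim t tau p r := by
  refine ⟨fun x z => ∃ y, SemiBrBisim t tau x y ∧ SemiBrBisim t tau y z,
    ⟨fun _ _ ⟨y, h₁, h₂⟩ => ⟨y, h₂.symm, h₁.symm⟩, ?_⟩, q, hpq, hqr⟩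
  rintro a c a' l ⟨b, hab, hbc⟩ ht
  rcases hab.transfer ht with ⟨b'', hs, hl, h₁, h₂⟩ | ⟨b'', b', hs, ht', h₁, h₂⟩
  · obtain ⟨c'', hsc, hbc''⟩ := hbc.exists_silentStar hs
    exact Or.inl ⟨c'', hsc, hl, ⟨b'', h₁, hbc''⟩, ⟨b'', h₂, hbc''⟩⟩
  · obtain ⟨c₀, hsc, hbc₀⟩ := hbc.exists_silentStar hs
    rcases hbc₀.transfer ht' with ⟨c₁, hs₁, hl, g₁, g₂⟩ | ⟨c₁, c₂, hs₁, ht₂, g₁, g₂⟩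
    · exact Or.inl ⟨c₁, hsc.trans hs₁, hl, ⟨b'', h₁, g₁⟩, ⟨b', h₂, g₂⟩⟩
    · exact Or.inr ⟨c₁, c₂, hsc.trans hs₁, ht₂, ⟨b'', h₁, g₁⟩, ⟨b', h₂, g₂⟩⟩

theorem SemiBrBisim.stutter {p q r : S} (hpq : SemiBrBisim t tau p q)
    (hpr : SilentStar t tau p r) (hrq : SilentStar t tau r q) :
    SemiBrBisim t tau r p := by
  refine ⟨fun x y => SemiBrBisim t tau x y ∨
    (SilentStar t tau p x ∧ SilentStar t tau x q ∧ y = p) ∨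
    (x = p ∧ SilentStar t tau p y ∧ SilentStar t tau y q),
    ⟨?_, ?_⟩, Or.inr (Or.inl ⟨hpr, hrq, rfl⟩)⟩
  · rintro x y (h | ⟨h₁, h₂, rfl⟩ | ⟨rfl, h₁, h₂⟩)
    · exact Or.inl h.symm
    · exact Or.inr (Or.inr ⟨rfl, h₁, h₂⟩)
    · exact Or.inr (Or.inl ⟨h₁, h₂, rfl⟩)
  · rintro a b a' l (h | ⟨hpa, -, rfl⟩ | ⟨rfl, -, hbq⟩) ht
    · rcases h.transfer ht with ⟨b'', hs, hl, g₁, g₂⟩ | ⟨b'', b', hs, ht', g₁, g₂⟩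
      · exact Or.inl ⟨b'', hs, hl, Or.inl g₁, Or.inl g₂⟩
      · exact Or.inr ⟨b'', b', hs, ht', Or.inl g₁, Or.inl g₂⟩
    · exact Or.inr ⟨a, a', hpa, ht, Or.inl (.refl a), Or.inl (.refl a')⟩
    -- `b` answers through `q`, which it reaches silently
    · rcases hpq.transfer ht with ⟨d, hs, hl, g₁, g₂⟩ | ⟨d, d', hs, ht', g₁, g₂⟩
      · exact Or.inl ⟨d, hbq.trans hs, hl, Or.inl g₁, Or.inl g₂⟩
      · exact Or.inr ⟨d, d', hbq.trans hs, ht', Or.inl g₁, Or.inl g₂⟩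

theorem isBranchingBisim_semiBrBisim : IsBranchingBisim t tau (SemiBrBisim t tau) := by
  refine ⟨fun _ _ h => h.symm, fun a b a' l hab ht => ?_⟩
  rcases hab.transfer ht with ⟨b'', hs, hl, g₁, g₂⟩ | h'
  · rcases hs.cases_tail with rfl | ⟨c, hsc, hstep⟩
    · exact Or.inl ⟨hl, g₂⟩
    · have hcb : SemiBrBisim t tau c b := (hab.symm.trans g₁).stutter hsc (.single hstep)
      exact Or.inr ⟨c, b'', hsc, hl ▸ hstep, hab.trans hcb.symm, g₂⟩
  · exact Or.inr h'

theorem SemiBrBisim.brBisim {p q : S} (h : SemiBrBisim t tau p q) : BrBisim t tau p q :=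
  ⟨_, isBranchingBisim_semiBrBisim, h⟩

theorem BrBisim.trans {p q r : S} (hpq : BrBisim t tau p q) (hqr : BrBisim t tau q r) :
    BrBisim t tau p r :=
  (hpq.semiBrBisim.trans hqr.semiBrBisim).brBisim

theorem BrBisim.stutter {p q r : S} (hpq : BrBisim t tau p q)
    (hpr : SilentStar t tau p r) (hrq : SilentStar t tau r q) :
    BrBisim t tau r p :=
  (hpq.semiBrBisim.stutter hpr hrq).brBisim

theorem cost_zero_iff {p q : S} : Cost t tau p q 0 ↔ SBStar t tau p q :=
  ⟨fun | .zero h => h, .zero⟩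

theorem Cost.cons {p p₁ q : S} {l : A} {n : ℕ} (ht : t p l p₁) (c : Cost t tau p₁ q n) :
    Cost t tau p q n ∨ Cost t tau p q (n + 1) := by
  by_cases hinert : l = tau ∧ BrBisim t tau p p₁
  · obtain ⟨rfl, hbr⟩ := hinert
    left
    cases c with
    | zero hsb => exact .zero ⟨.head ht hsb.1, hbr.trans hsb.2⟩
    | step hsb hJ c' => exact .step ⟨.head ht hsb.1, hbr.trans hsb.2⟩ hJ c'
  · have hJ : JStep t tau p p₁ := by
      by_cases hl : l = tau
      · subst hl
        exact Or.inr ⟨ht, fun hbr => hinert ⟨rfl, hbr⟩⟩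
      · exact Or.inl ⟨l, hl, ht⟩
    exact Or.inr (.step ⟨.refl, .refl _⟩ hJ c)

theorem exists_cost_of_reflTransGen {p q : S}
    (h : Relation.ReflTransGen (fun p q => ∃ l, t p l q) p q) :
    ∃ n, Cost t tau p q n := by
  induction h using Relation.ReflTransGen.head_induction_on with
  | refl => exact ⟨0, .zero ⟨.refl, .refl _⟩⟩
  | head hstep _ ih =>
    obtain ⟨l, ht⟩ := hstep
    obtain ⟨n, c⟩ := ih
    exact (c.cons ht).elim (⟨n, ·⟩) (⟨n + 1, ·⟩)

end Bisimilarity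

namespace BPA

variable {V A : Type*} {rules : V → A → List V → Prop} {tau : A}

local notation "T" => BPA.Trans rules
local notation "Br" => BrBisim (BPA.Trans rules) tau
local notation "Sil" => SilentStar (BPA.Trans rules) tau
local notation "SB" => SBStar (BPA.Trans rules) tau
local notation "Cst" => Cost (BPA.Trans rules) tau

theorem Trans.append_right {θ θ' : List V} {l : A} (h : T θ l θ') (ζ : List V) :
    T (θ ++ ζ) l (θ' ++ ζ) := by
  obtain ⟨X, a, β, rfl, hr, rfl⟩ := h
  exact ⟨X, a, β ++ ζ, rfl, hr, by simp⟩

theorem Trans.cons_append_inv {X : V} {θ ζ q : List V} {l : A} (h : T (X :: θ ++ ζ) l q) :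
    ∃ θ', q = θ' ++ ζ ∧ T (X :: θ) l θ' := by
  obtain ⟨X', a, β, heq, hr, rfl⟩ := h
  obtain ⟨rfl, rfl⟩ := List.cons.inj heq
  exact ⟨a ++ θ, by simp, X, a, θ, rfl, hr, rfl⟩

theorem not_trans_nil {l : A} {q : List V} : ¬ T [] l q :=
  fun ⟨_, _, _, heq, _⟩ => List.cons_ne_nil _ _ heq.symm

theorem Reach.append_right {θ θ' : List V} (h : Reach rules θ θ') (ζ : List V) :
    Reach rules (θ ++ ζ) (θ' ++ ζ) :=
  h.lift (· ++ ζ) fun _ _ ⟨l, ht⟩ => ⟨l, ht.append_right ζ⟩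

theorem Normed.reach_nil (hn : Normed rules) (β : List V) : Reach rules β [] := by
  induction β with
  | nil => exact .refl
  | cons X β ih => exact ((hn X).append_right β).trans ih

theorem Normed.reach_append_left (hn : Normed rules) (θ ζ : List V) :
    Reach rules (θ ++ ζ) ζ :=
  (hn.reach_nil θ).append_right ζ

theorem silentStar_append_cases {θ ζ r : List V} (h : Sil (θ ++ ζ) r) :
    (∃ θ', r = θ' ++ ζ ∧ ∀ ζ₂, Sil (θ ++ ζ₂) (θ' ++ ζ₂)) ∨
      (Sil ζ r ∧ ∀ ζ₂, Sil (θ ++ ζ₂) ζ₂) := by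
  generalize hp : θ ++ ζ = p at h
  induction h using Relation.ReflTransGen.head_induction_on generalizing θ with
  | refl =>
    subst hp
    exact Or.inl ⟨θ, rfl, fun _ => .refl⟩
  | head hstep htail ih =>
    subst hp
    match θ, hstep with
    | [], hstep => exact Or.inr ⟨.head hstep htail, fun _ => .refl⟩
    | X :: θ, hstep =>
      obtain ⟨θ₁, rfl, hstep'⟩ := Trans.cons_append_inv hstep
      refine (ih rfl).imp (fun ⟨θ', hr, lift⟩ => ⟨θ', hr, fun ζ₂ => ?_⟩)
        (fun ⟨hs, lift⟩ => ⟨hs, fun ζ₂ => ?_⟩)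
      · exact .head (hstep'.append_right ζ₂) (lift ζ₂)
      · exact .head (hstep'.append_right ζ₂) (lift ζ₂)

theorem silentStar_through_suffix {θ η ζ : List V} (h : Sil (θ ++ η) ζ)
    (hlen : ζ.length ≤ η.length) : (∀ ζ₂, Sil (θ ++ ζ₂) ζ₂) ∧ Sil η ζ := by
  rcases silentStar_append_cases h with ⟨θ', rfl, lift⟩ | h'
  · obtain rfl : θ' = [] :=
      List.eq_nil_of_length_eq_zero (by rw [List.length_append] at hlen; omega)
    exact ⟨lift, .refl⟩
  · exact h'.symm

theorem _root_.SBStar.through_suffix {θ η ζ : List V} (h : SB (θ ++ η) ζ)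
    (hlen : ζ.length ≤ η.length) : SB (θ ++ η) η ∧ SB η ζ := by
  obtain ⟨lift, hηζ⟩ := silentStar_through_suffix h.1 hlen
  have hη : Br η (θ ++ η) := h.2.stutter (lift η) hηζ
  exact ⟨⟨lift η, hη.symm⟩, hηζ, hη.trans h.2⟩

theorem _root_.Cost.split {ζ p q : List V} {n : ℕ} (c : Cst p q n) {θ : List V} (hp : p = θ ++ ζ)
    (hq : ∀ ρ, q ≠ ρ ++ ζ) :
    ∃ n₁ n₂, n₁ + n₂ ≤ n ∧ Cst p ζ n₁ ∧ Cst ζ q n₂ := by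
  induction c generalizing θ with
  | @zero p q hsb =>
    subst hp
    rcases silentStar_append_cases hsb.1 with ⟨θ', rfl, -⟩ | ⟨hs₂, lift⟩
    · exact absurd rfl (hq θ')
    · have hst : Br ζ (θ ++ ζ) := hsb.2.stutter (lift ζ) hs₂
      exact ⟨0, 0, le_rfl, .zero ⟨lift ζ, hst.symm⟩, .zero ⟨hs₂, hst.trans hsb.2⟩⟩
  | @step p p' p'' q n hsb hJ c' ih =>
    subst hp
    rcases silentStar_append_cases hsb.1 with ⟨θ', rfl, -⟩ | ⟨hs₂, lift⟩
    · match θ', hJ with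
      | [], hJ => exact ⟨0, n + 1, by omega, .zero hsb, .step ⟨.refl, .refl _⟩ hJ c'⟩
      | Y :: θ₀, hJ =>
        obtain ⟨l, ht⟩ : ∃ l, T (Y :: θ₀ ++ ζ) l p'' := by
          rcases hJ with ⟨a, -, ht⟩ | ⟨ht, -⟩
          exacts [⟨a, ht⟩, ⟨tau, ht⟩]
        obtain ⟨θ'', rfl, -⟩ := Trans.cons_append_inv ht
        obtain ⟨n₁, n₂, hle, c₁, c₂⟩ := ih rfl hq
        exact ⟨n₁ + 1, n₂, by omega, .step hsb hJ c₁, c₂⟩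
    · have hst : Br ζ (θ ++ ζ) := hsb.2.stutter (lift ζ) hs₂
      exact ⟨0, n + 1, by omega, .zero ⟨lift ζ, hst.symm⟩, .step ⟨hs₂, hst.trans hsb.2⟩ hJ c'⟩

theorem _root_.Cost.split_nil {θ ζ : List V} {n : ℕ} (c : Cst (θ ++ ζ) [] n) :
    ∃ n₁ n₂, n₁ + n₂ ≤ n ∧ Cst (θ ++ ζ) ζ n₁ ∧ Cst ζ [] n₂ := by
  cases ζ with
  | nil => exact ⟨n, 0, le_rfl, c, .zero ⟨.refl, .refl _⟩⟩
  | cons Z ζ => exact c.split rfl fun ρ h => by simp at h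

theorem bnorm_eq_sInf (α : List V) : bnorm rules tau α = sInf {n | Cst α [] n} := by
  simp [bnorm, bnormRel]

theorem bnorm_le_of_cost {α : List V} {n : ℕ} (c : Cst α [] n) : bnorm rules tau α ≤ n := by
  rw [bnorm_eq_sInf]
  exact Nat.sInf_le c

theorem Normed.cost_bnorm (hn : Normed rules) (α : List V) : Cst α [] (bnorm rules tau α) := by
  rw [bnorm_eq_sInf]
  exact Nat.sInf_mem (exists_cost_of_reflTransGen (hn.reach_nil α))

theorem Normed.sbStar_of_bnorm_append_le (hn : Normed rules) {θ η : List V}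
    (h : bnorm rules tau (θ ++ η) ≤ bnorm rules tau η) : SB (θ ++ η) η := by
  obtain ⟨n₁, n₂, hle, c₁, c₂⟩ := (hn.cost_bnorm (tau := tau) (θ ++ η)).split_nil
  have := bnorm_le_of_cost c₂
  obtain rfl : n₁ = 0 := by omega
  exact cost_zero_iff.mp c₁

theorem Normed.bnorm_le_bnorm_append (hn : Normed rules) (θ η : List V) :
    bnorm rules tau η ≤ bnorm rules tau (θ ++ η) := by
  obtain ⟨n₁, n₂, hle, -, c₂⟩ := (hn.cost_bnorm (tau := tau) (θ ++ η)).split_nil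
  exact (bnorm_le_of_cost c₂).trans (by omega)

theorem Normed.bnorm_lt_bnorm_append (hn : Normed rules) {θ η : List V}
    (h : ¬ SB (θ ++ η) η) : bnorm rules tau η < bnorm rules tau (θ ++ η) :=
  (hn.bnorm_le_bnorm_append θ η).lt_of_not_ge (mt hn.sbStar_of_bnorm_append_le h)

theorem silentStar_nil_of_brBisim_nil {q : List V} (hr : Reach rules q []) (h : Br q []) :
    Sil q [] := by
  induction hr using Relation.ReflTransGen.head_induction_on with
  | refl => exact .refl
  | head hstep _ ih =>
    obtain ⟨l, ht⟩ := hstep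
    rcases h.transfer ht with ⟨rfl, hb⟩ | ⟨b'', b', hs, ht', -, -⟩
    · exact .head ht (ih hb)
    · rcases hs.cases_head with rfl | ⟨c, hc, -⟩
      exacts [absurd ht' not_trans_nil, absurd hc not_trans_nil]

theorem Normed.exists_cost_le_of_brBisim (hn : Normed rules) {n : ℕ} {p q : List V}
    (c : Cst p [] n) (h : Br p q) : ∃ m ≤ n, Cst q [] m := by
  generalize hr : ([] : List V) = r at c
  induction c generalizing q with
  | @zero p r hsb =>
    subst hr
    have hq : Br q [] := h.symm.trans hsb.2
    exact ⟨0, le_rfl, .zero ⟨silentStar_nil_of_brBisim_nil (hn.reach_nil q) hq, hq⟩⟩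
  | @step p p' p'' r n hsb hJ c' ih =>
    have hp'q : Br p' q := hsb.2.symm.trans h
    rcases hJ with ⟨a, hne, ht⟩ | ⟨ht, hnbr⟩
    · rcases hp'q.transfer ht with ⟨hl, -⟩ | ⟨q'', q', hs, ht', h₁, h₂⟩
      · exact absurd hl hne
      · obtain ⟨m, hm, cm⟩ := ih h₂ hr
        exact ⟨m + 1, by omega, .step ⟨hs, hp'q.symm.trans h₁⟩ (Or.inl ⟨a, hne, ht'⟩) cm⟩
    · rcases hp'q.transfer ht with ⟨-, hb⟩ | ⟨q'', q', hs, ht', h₁, h₂⟩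
      · obtain ⟨m, hm, cm⟩ := ih hb hr
        exact ⟨m, by omega, cm⟩
      · have hnb : ¬ Br q'' q' := fun hc => hnbr ((h₁.trans hc).trans h₂.symm)
        obtain ⟨m, hm, cm⟩ := ih h₂ hr
        exact ⟨m + 1, by omega, .step ⟨hs, hp'q.symm.trans h₁⟩ (Or.inr ⟨ht', hnb⟩) cm⟩

theorem Normed.bnorm_eq_of_brBisim (hn : Normed rules) {p q : List V} (h : Br p q) :
    bnorm rules tau p = bnorm rules tau q := by
  have hle : ∀ {x y : List V}, Br x y → bnorm rules tau y ≤ bnorm rules tau x := fun hxy =>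
    let ⟨_, hm, cm⟩ := hn.exists_cost_le_of_brBisim (hn.cost_bnorm _) hxy
    (bnorm_le_of_cost cm).trans hm
  exact (hle h.symm).antisymm (hle h)

theorem _root_.BrBisim.append_left {ζ ζ' : List V} (h : Br ζ ζ') (θ : List V) :
    Br (θ ++ ζ) (θ ++ ζ') := by
  let R : List V → List V → Prop := fun p q => ∃ θ x y, Br x y ∧ p = θ ++ x ∧ q = θ ++ y
  refine ⟨R, ⟨fun _ _ ⟨θ, x, y, hxy, hp, hq⟩ => ⟨θ, y, x, hxy.symm, hq, hp⟩, ?_⟩,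
    θ, ζ, ζ', h, rfl, rfl⟩
  rintro _ _ p' l ⟨θ, x, y, hxy, rfl, rfl⟩ ht
  match θ, ht with
  | [], ht => exact hxy.transfer_mono (fun h => ⟨[], _, _, h, rfl, rfl⟩) ht
  | Y :: θ, ht =>
    obtain ⟨θ', rfl, ht'⟩ := Trans.cons_append_inv ht
    exact Or.inr ⟨_, _, .refl, ht'.append_right y,
      ⟨Y :: θ, x, y, hxy, rfl, rfl⟩, ⟨θ', x, y, hxy, rfl, rfl⟩⟩

theorem rd_eq_of_brBisim {γ γ' : List V} (h : Br γ γ') : Rd rules tau γ = Rd rules tau γ' := by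
  ext X
  exact ⟨fun hX => ((h.symm.append_left [X]).trans hX).trans h,
    fun hX => ((h.append_left [X]).trans hX).trans h.symm⟩

theorem Normed.brBisim_append_of_rd_eq (hn : Normed rules) {γ γ' : List V}
    (hrd : Rd rules tau γ = Rd rules tau γ') : ∀ β : List V, Br (β ++ γ) γ → Br (β ++ γ') γ'
  | [], _ => .refl _
  | Y :: β, h => by
    have hY : Br (Y :: β ++ γ) (β ++ γ) := (hn.sbStar_of_bnorm_append_le (θ := [Y])
      ((hn.bnorm_eq_of_brBisim h).trans_le (hn.bnorm_le_bnorm_append β γ))).2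
    have hβ : Br (β ++ γ) γ := hY.symm.trans h
    have hYγ' : Y ∈ Rd rules tau γ' := by
      rw [← hrd, ← rd_eq_of_brBisim hβ]
      exact hY
    exact ((hn.brBisim_append_of_rd_eq hrd β hβ).append_left [Y]).trans hYγ'

theorem Normed.brBisim_append_append_of_rd_eq (hn : Normed rules) {γ γ' : List V}
    (hrd : Rd rules tau γ = Rd rules tau γ') {ξ η : List V} (h : Br (ξ ++ γ) (η ++ γ)) :
    Br (ξ ++ γ') (η ++ γ') := by
  let R : List V → List V → Prop := fun p q =>
    (∃ ξ η, p = ξ ++ γ' ∧ q = η ++ γ' ∧ Br (ξ ++ γ) (η ++ γ)) ∨ Br p q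
  refine ⟨R, ⟨?_, ?_⟩, Or.inl ⟨ξ, η, rfl, rfl, h⟩⟩
  · rintro p q (⟨ξ, η, rfl, rfl, h⟩ | h)
    exacts [Or.inl ⟨η, ξ, rfl, rfl, h.symm⟩, Or.inr h.symm]
  rintro p q p' l (⟨ξ, η, rfl, rfl, h⟩ | h) ht
  swap
  · exact h.transfer_mono (R := R) Or.inr ht
  by_cases habs : Br (ξ ++ γ) γ
  · -- both sides are absorbed by `γ`, hence also by `γ'`
    have hξ := hn.brBisim_append_of_rd_eq hrd ξ habs
    have hη := hn.brBisim_append_of_rd_eq hrd η (h.symm.trans habs)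
    exact (hξ.trans hη.symm).transfer_mono (R := R) Or.inr ht
  match ξ, ht with
  | [], _ => exact absurd (.refl _) habs
  | X :: ξ, ht =>
    obtain ⟨θ, rfl, ht'⟩ := Trans.cons_append_inv ht
    rcases h.transfer (ht'.append_right γ) with ⟨hl, h'⟩ | ⟨m, m', hs, htm, h₁, h₂⟩
    · exact Or.inl ⟨hl, Or.inl ⟨θ, η, rfl, rfl, h'⟩⟩
    rcases silentStar_append_cases hs with ⟨η', rfl, lift⟩ | ⟨hs₂, lift⟩
    · match η', htm with
      | [], _ => exact absurd h₁ habs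
      | Z :: η', htm =>
        obtain ⟨η'', rfl, htm'⟩ := Trans.cons_append_inv htm
        exact Or.inr ⟨_, _, lift γ', htm'.append_right γ',
          Or.inl ⟨_, _, rfl, rfl, h₁⟩, Or.inl ⟨θ, η'', rfl, rfl, h₂⟩⟩
    -- the answer of `η γ` would pass through `γ`, making `ξ γ` absorbed after all
    · have hγ : Br γ (η ++ γ) := (h.symm.trans h₁).stutter (lift γ) hs₂
      exact absurd (h.trans hγ.symm) habs

theorem Normed.rd_append_congr (hn : Normed rules) {γ γ' : List V}
    (hrd : Rd rules tau γ = Rd rules tau γ') (δ : List V) :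
    Rd rules tau (δ ++ γ) = Rd rules tau (δ ++ γ') := by
  ext X
  exact ⟨fun hX => hn.brBisim_append_append_of_rd_eq (ξ := X :: δ) hrd hX,
    fun hX => hn.brBisim_append_append_of_rd_eq (ξ := X :: δ) hrd.symm hX⟩

/-- `θ` is the string left above the initial tail `ζ` by following a path of `G(Δ)` from
`(X, R)` to `(Y, R')`. -/
def Pushes (rules : V → A → List V → Prop) (tau : A) (X : V) (R : Set V) (Y : V) (R' : Set V)
    (θ : List V) : Prop :=
  ∀ ζ, Rd rules tau ζ = R → Rd rules tau (θ ++ ζ) = R' ∧ Reach rules (X :: ζ) (Y :: (θ ++ ζ))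

def NonVanishing (rules : V → A → List V → Prop) (tau : A) (R : Set V) (θ : List V) : Prop :=
  ∀ ζ, Rd rules tau ζ = R → ¬ SBStar (Trans rules) tau (θ ++ ζ) ζ

theorem Pushes.refl (X : V) (R : Set V) : Pushes rules tau X R X R [] :=
  fun _ hζ => ⟨hζ, .refl⟩

theorem Pushes.trans {X Y Z : V} {R R' R'' : Set V} {θ θ' : List V}
    (h : Pushes rules tau X R Y R' θ) (h' : Pushes rules tau Y R' Z R'' θ') :
    Pushes rules tau X R Z R'' (θ' ++ θ) := fun ζ hζ => by
  obtain ⟨hRd, hr⟩ := h ζ hζ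
  obtain ⟨hRd', hr'⟩ := h' (θ ++ ζ) hRd
  rw [List.append_assoc]
  exact ⟨hRd', hr.trans hr'⟩

theorem Normed.pushes_of_rule (hn : Normed rules) {X Y : V} {l : A} {σ δ : List V}
    (hr : rules X l (σ ++ Y :: δ)) (γ : List V) :
    Pushes rules tau X (Rd rules tau γ) Y (Rd rules tau (δ ++ γ)) δ := fun ζ hζ =>
  ⟨hn.rd_append_congr hζ δ,
    .head ⟨l, X, _, ζ, rfl, hr, by simp⟩ (hn.reach_append_left σ (Y :: (δ ++ ζ)))⟩

theorem Normed.nonVanishing_of_bnormRel_pos (hn : Normed rules) {δ γ : List V}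
    (hpos : 0 < bnormRel rules tau δ γ) : NonVanishing rules tau (Rd rules tau γ) δ := by
  intro ζ hζ hsb
  have hsil := (silentStar_through_suffix hsb.1 le_rfl).1 γ
  have hbr := hn.brBisim_append_of_rd_eq hζ δ hsb.2
  have : bnormRel rules tau δ γ ≤ 0 := Nat.sInf_le (cost_zero_iff.mpr ⟨hsil, hbr⟩)
  omega

theorem GEdge.exists_pushes (hn : Normed rules) {X Y : V} {R R' : Set V}
    (h : GEdge rules tau X R Y R') : ∃ δ, Pushes rules tau X R Y R' δ := by
  obtain ⟨l, σ, δ, γ, hr, rfl, rfl⟩ := h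
  exact ⟨δ, hn.pushes_of_rule hr γ⟩

theorem GHeavy.exists_pushes (hn : Normed rules) {X Y : V} {R R' : Set V}
    (h : GHeavy rules tau X R Y R') :
    ∃ δ, Pushes rules tau X R Y R' δ ∧ NonVanishing rules tau R δ := by
  obtain ⟨l, σ, δ, γ, hr, rfl, rfl, hpos⟩ := h
  exact ⟨δ, hn.pushes_of_rule hr γ, hn.nonVanishing_of_bnormRel_pos hpos⟩

theorem NonVanishing.append_pushes {X Y : V} {R R' : Set V} {δ Q : List V}
    (hδ : NonVanishing rules tau R' δ) (hQ : Pushes rules tau X R Y R' Q) (P : List V) :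
    NonVanishing rules tau R (P ++ (δ ++ Q)) := by
  intro ζ hζ hsb
  simp only [List.append_assoc] at hsb
  have hδζ := (hsb.through_suffix (by simp only [List.length_append]; omega)).2
  exact hδ (Q ++ ζ) (hQ ζ hζ).1 (hδζ.through_suffix (by simp only [List.length_append]; omega)).1

theorem Normed.exists_reach_bnorm_ge (hn : Normed rules) {X : V} {R : Set V} {C : List V}
    (hC : Pushes rules tau X R X R C) (hCnv : NonVanishing rules tau R C) {ζ : List V}
    (hζ : Rd rules tau ζ = R) (m : ℕ) :
    ∃ ζ', Rd rules tau ζ' = R ∧ Reach rules (X :: ζ) (X :: ζ') ∧ m ≤ bnorm rules tau ζ' := by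
  induction m with
  | zero => exact ⟨ζ, hζ, .refl, Nat.zero_le _⟩
  | succ m ih =>
    obtain ⟨ζ', hζ', hr, hm⟩ := ih
    obtain ⟨hRd, hr'⟩ := hC ζ' hζ'
    exact ⟨C ++ ζ', hRd, hr.trans hr', hm.trans_lt (hn.bnorm_lt_bnorm_append (hCnv ζ' hζ'))⟩

section Path

variable {Xs : ℕ → V} {Rs : ℕ → Set V} {k : ℕ}

theorem Normed.exists_pushes_of_path (hn : Normed rules)
    (hedge : ∀ l < k, GEdge rules tau (Xs l) (Rs l) (Xs (l + 1)) (Rs (l + 1)))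
    {b l : ℕ} (hbl : b ≤ l) (hlk : l ≤ k) :
    ∃ θ, Pushes rules tau (Xs b) (Rs b) (Xs l) (Rs l) θ := by
  induction l, hbl using Nat.le_induction with
  | base => exact ⟨[], .refl _ _⟩
  | succ l _ ih =>
    obtain ⟨θ, hθ⟩ := ih (by omega)
    obtain ⟨δ, hδ⟩ := (hedge l (by omega)).exists_pushes hn
    exact ⟨δ ++ θ, hθ.trans hδ⟩

theorem Normed.exists_nonVanishing_pushes_of_path (hn : Normed rules)
    (hedge : ∀ l < k, GEdge rules tau (Xs l) (Rs l) (Xs (l + 1)) (Rs (l + 1)))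
    {i h : ℕ} (hih : i ≤ h) (hhk : h < k)
    (hheavy : GHeavy rules tau (Xs h) (Rs h) (Xs (h + 1)) (Rs (h + 1))) :
    ∃ C, Pushes rules tau (Xs i) (Rs i) (Xs k) (Rs k) C ∧ NonVanishing rules tau (Rs i) C := by
  obtain ⟨Q, hQ⟩ := hn.exists_pushes_of_path hedge hih hhk.le
  obtain ⟨δ, hδ, hδnv⟩ := hheavy.exists_pushes hn
  obtain ⟨P, hP⟩ := hn.exists_pushes_of_path hedge hhk le_rfl
  exact ⟨P ++ (δ ++ Q), (hQ.trans hδ).trans hP, hδnv.append_pushes hQ P⟩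

end Path

end BPA

section SumTrans

variable {S₁ S₂ A : Type*} {t₁ : S₁ → A → S₁ → Prop} {t₂ : S₂ → A → S₂ → Prop} {tau : A}

theorem SumTrans.exists_of_inl {p : S₁} {l : A} {x : S₁ ⊕ S₂} (h : SumTrans t₁ t₂ (.inl p) l x) :
    ∃ q, x = .inl q ∧ t₁ p l q := by
  cases x with
  | inl q => exact ⟨q, rfl, h⟩
  | inr q => exact h.elim

theorem SumTrans.exists_of_inr {p : S₂} {l : A} {x : S₁ ⊕ S₂} (h : SumTrans t₁ t₂ (.inr p) l x) :
    ∃ q, x = .inr q ∧ t₂ p l q := by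
  cases x with
  | inl q => exact h.elim
  | inr q => exact ⟨q, rfl, h⟩

theorem SilentStar.exists_of_sumTrans_inl {p : S₁} {x : S₁ ⊕ S₂}
    (h : SilentStar (SumTrans t₁ t₂) tau (.inl p) x) :
    ∃ q, x = .inl q ∧ SilentStar t₁ tau p q := by
  generalize hy : (.inl p : S₁ ⊕ S₂) = y at h
  induction h using Relation.ReflTransGen.head_induction_on generalizing p with
  | refl => exact ⟨p, hy.symm, .refl⟩
  | head hstep _ ih =>
    subst hy
    obtain ⟨p₁, rfl, ht⟩ := SumTrans.exists_of_inl hstep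
    obtain ⟨q, rfl, hs⟩ := ih rfl
    exact ⟨q, rfl, .head ht hs⟩

theorem SilentStar.exists_of_sumTrans_inr {p : S₂} {x : S₁ ⊕ S₂}
    (h : SilentStar (SumTrans t₁ t₂) tau (.inr p) x) :
    ∃ q, x = .inr q ∧ SilentStar t₂ tau p q := by
  generalize hy : (.inr p : S₁ ⊕ S₂) = y at h
  induction h using Relation.ReflTransGen.head_induction_on generalizing p with
  | refl => exact ⟨p, hy.symm, .refl⟩
  | head hstep _ ih =>
    subst hy
    obtain ⟨p₁, rfl, ht⟩ := SumTrans.exists_of_inr hstep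
    obtain ⟨q, rfl, hs⟩ := ih rfl
    exact ⟨q, rfl, .head ht hs⟩

theorem BrBisim.of_sumTrans_inl {p q : S₁}
    (h : BrBisim (SumTrans t₁ t₂) tau (.inl p) (.inl q)) : BrBisim t₁ tau p q := by
  refine ⟨fun x y => BrBisim (SumTrans t₁ t₂) tau (.inl x) (.inl y),
    ⟨fun _ _ hxy => hxy.symm, fun x y x' l hxy ht => ?_⟩, h⟩
  rcases hxy.transfer (t := SumTrans t₁ t₂) (a' := .inl x') ht with
    ⟨hl, hb⟩ | ⟨b'', b', hs, ht', h₁, h₂⟩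
  · exact Or.inl ⟨hl, hb⟩
  · obtain ⟨y'', rfl, hs'⟩ := hs.exists_of_sumTrans_inl
    obtain ⟨y', rfl, ht''⟩ := SumTrans.exists_of_inl ht'
    exact Or.inr ⟨y'', y', hs', ht'', h₁, h₂⟩

theorem BrBisim.exists_reach_of_sumTrans {p β : S₁} {s : S₂}
    (hb : BrBisim (SumTrans t₁ t₂) tau (.inl p) (.inr s))
    (hr : Relation.ReflTransGen (fun p q => ∃ l, t₁ p l q) p β) :
    ∃ q, Relation.ReflTransGen (fun p q => ∃ l, t₂ p l q) s q ∧
      BrBisim (SumTrans t₁ t₂) tau (.inl β) (.inr q) := by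
  induction hr with
  | refl => exact ⟨s, .refl, hb⟩
  | tail _ hstep ih =>
    obtain ⟨q, hq, hbq⟩ := ih
    obtain ⟨l, ht⟩ := hstep
    rcases hbq.transfer (t := SumTrans t₁ t₂) (a' := .inl _) ht with
      ⟨-, hb'⟩ | ⟨b'', b', hs, ht', -, h₂⟩
    · exact ⟨q, hq, hb'⟩
    · obtain ⟨q₁, rfl, hs'⟩ := hs.exists_of_sumTrans_inr
      obtain ⟨q₂, rfl, htq⟩ := SumTrans.exists_of_inr ht'
      have hsq : Relation.ReflTransGen (fun p q => ∃ l, t₂ p l q) q q₁ :=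
        Relation.ReflTransGen.mono (fun _ _ h => ⟨tau, h⟩) _ _ hs'
      exact ⟨q₂, (hq.trans hsq).tail ⟨l, htq⟩, h₂⟩

end SumTrans

theorem BPA.Normed.not_regularBr_of_unbounded {V : Type*} {A : Type}
    {rules : V → A → List V → Prop} {tau : A} (hn : BPA.Normed rules) {p : List V}
    (h : ∀ m, ∃ β, BPA.Reach rules p β ∧ m ≤ BPA.bnorm rules tau β) :
    ¬ BPA.RegularBr rules tau p := by
  rintro ⟨St, t, s, hfin, hbis⟩
  let matched (q : St) : Set ℕ := {n | ∃ β, BPA.bnorm rules tau β = n ∧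
    BrBisim (SumTrans (BPA.Trans rules) t) tau (.inl β) (.inr q)}
  have hsub (q : St) : (matched q).Subsingleton := by
    rintro _ ⟨β₁, rfl, h₁⟩ _ ⟨β₂, rfl, h₂⟩
    exact hn.bnorm_eq_of_brBisim (h₁.trans h₂.symm).of_sumTrans_inl
  obtain ⟨M, hM⟩ := (hfin.biUnion fun q _ => (hsub q).finite).bddAbove
  obtain ⟨β, hr, hβ⟩ := h (M + 1)
  obtain ⟨q, hq, hβq⟩ := hbis.exists_reach_of_sumTrans hr
  have := hM (Set.mem_biUnion hq ⟨β, rfl, hβq⟩)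
  omega

theorem witness_path_not_regular_general {V : Type*} {A : Type}
    (rules : V → A → List V → Prop) (tau : A) (hn : BPA.Normed rules)
    (X₀ : V) (α : List V) (k : ℕ) (Xs : ℕ → V) (Rs : ℕ → Set V) (u : ℕ → ℕ)
    (hX0 : Xs 0 = X₀) (hR0 : Rs 0 = BPA.Rd rules tau α)
    (hedge : ∀ l < k, BPA.GEdge rules tau (Xs l) (Rs l) (Xs (l + 1)) (Rs (l + 1)))
    (hw : ∀ l < k, u l ≤ 1 ∧
      (u l = 1 ↔ BPA.GHeavy rules tau (Xs l) (Rs l) (Xs (l + 1)) (Rs (l + 1))))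
    (hwitness : ∃ i < k, Xs i = Xs k ∧ Rs i = Rs k ∧
      0 < ∑ l ∈ Finset.Ico i k, u l) :
    (∀ m : ℕ, 0 < m → ∃ β : List V,
        BPA.Reach rules (X₀ :: α) β ∧ m ≤ BPA.bnorm rules tau β) ∧
    ¬ BPA.RegularBr rules tau (X₀ :: α) := by
  obtain ⟨i, hik, hXik, hRik, hsum⟩ := hwitness
  obtain ⟨h, hmem, hu⟩ := Finset.exists_ne_zero_of_sum_ne_zero hsum.ne'
  obtain ⟨hih, hhk⟩ := Finset.mem_Ico.mp hmem
  have hheavy := (hw h hhk).2.mp (by have := (hw h hhk).1; omega)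
  obtain ⟨C, hC, hCnv⟩ := hn.exists_nonVanishing_pushes_of_path hedge hih hhk hheavy
  rw [← hXik, ← hRik] at hC
  obtain ⟨θ, hθ⟩ := hn.exists_pushes_of_path hedge (Nat.zero_le i) hik.le
  obtain ⟨hRdθ, hreach⟩ := hθ α hR0.symm
  rw [hX0] at hreach
  have hunb (m : ℕ) : ∃ β, BPA.Reach rules (X₀ :: α) β ∧ m ≤ BPA.bnorm rules tau β := by
    obtain ⟨ζ, -, hr, hm⟩ := hn.exists_reach_bnorm_ge hC hCnv hRdθ m
    exact ⟨Xs i :: ζ, hreach.trans hr, hm.trans (hn.bnorm_le_bnorm_append [Xs i] ζ)⟩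
  exact ⟨fun m _ => hunb m, hn.not_regularBr_of_unbounded hunb⟩

/-- A witness path in G(Δ) certifies irregularity: the process X₀α reaches
processes of unbounded branching norm, hence is not regular w.r.t. branching
bisimilarity. -/
theorem witness_path_not_regular {V : Type*} {A : Type}
    (rules : V → A → List V → Prop) (tau : A) (hn : BPA.Normed rules)
    (X₀ : V) (α : List V) (k : ℕ) (Xs : ℕ → V) (Rs : ℕ → Set V) (u : ℕ → ℕ)
    (hX0 : Xs 0 = X₀) (hR0 : Rs 0 = BPA.Rd rules tau α)
    (hreal : ∀ l ≤ k, BPA.Realizable rules tau (Rs l))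
    (hedge : ∀ l < k, BPA.GEdge rules tau (Xs l) (Rs l) (Xs (l + 1)) (Rs (l + 1)))
    (hw : ∀ l < k, u l ≤ 1 ∧
      (u l = 1 ↔ BPA.GHeavy rules tau (Xs l) (Rs l) (Xs (l + 1)) (Rs (l + 1))))
    (hwitness : ∃ i < k, Xs i = Xs k ∧ Rs i = Rs k ∧
      0 < ∑ l ∈ Finset.Ico i k, u l) :
    (∀ m : ℕ, 0 < m → ∃ β : List V,
        BPA.Reach rules (X₀ :: α) β ∧ m ≤ BPA.bnorm rules tau β) ∧
    ¬ BPA.RegularBr rules tau (X₀ :: α) :=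
  witness_path_not_regular_general rules tau hn X₀ α k Xs Rs u hX0 hR0 hedge hw hwitness
end
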